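/- arXiv:2203.10144 — 3 statements merged into one kernel-verified Lean document; each statement's English description precedes it below -/
import Mathlib

section
/- Let E be a real inner product space and consider SoftPull iterates on a probability space as follows: random vectors w^{r,m}_k and g^{r,m}_k (r ≥ 0, 0 ≤ m ≤ M−1, 1 ≤ k ≤ K, K ≥ 2, M ≥ 1) with w^{0,0}_k = w₀ deterministic and identical for all k, w^{r,m+1}_k = w^{r,m}_k − η·g^{r,m}_k, and w^{r+1,0}_k = λ'·w^{r,M}_k + (1−λ')·w̄^{r,M}, where λ' = (Kλ−1)/(K−1) ∈ [0,1), λ ∈ [1/K, 1), and bars denote uniform averages over k. If (1/K)·Σ_{k=1}^K E‖g^{r',m}_k‖² ≤ 2(G² + σ²) for all r' ≤ r and all m, then (1/K)·Σ_{k=1}^K E‖w^{r+1,0}_k − w^{r,M}_k‖² ≤ (1 − (λ')^{r+1})²·2M²(G² + σ²)η². -/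
/-!
Let `dev` send a family of client vectors to its deviations from the client mean. Mixing keeps
the mean and multiplies the deviation by `λ'`; a round of local steps subtracts `η` times the
deviation of the accumulated gradients `S_j = ∑_m g^{j,m}`. As all clients start at `w₀`, the
deviation after round `r` is `-η ∑_{i ≤ r} λ'^i dev(S_{r-i})`, and the mixing displacement is
`-(1 - λ')` times it. Cauchy–Schwarz with weights `λ'^i` (total `A = ∑_{i ≤ r} λ'^i`), the fact
that subtracting the mean decreases `∑_k ‖·‖²`, and `‖∑_m g_m‖² ≤ M ∑_m ‖g_m‖²` bound the
displacement pointwise; in expectation this gives `(1 - λ')² A² M² · 2(G² + σ²) η²` per client,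
and `(1 - λ') A = 1 - λ'^(r+1)`.
-/

open MeasureTheory Finset

lemma eq_sub_smul_sum_of_forall_lt {E : Type*} [AddCommGroup E] [Module ℝ E] {u v : ℕ → E}
    {η : ℝ} {M : ℕ} (h : ∀ m < M, u (m + 1) = u m - η • v m) :
    u M = u 0 - η • ∑ m ∈ range M, v m := by
  have hstep : ∀ m ∈ range M, u (m + 1) - u m = -(η • v m) := fun m hm => by
    rw [h m (mem_range.1 hm)]; abel
  have := sum_range_sub u M
  rw [sum_congr rfl hstep, sum_neg_distrib, ← smul_sum] at this
  rw [sub_eq_add_neg, this]; abel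

lemma eq_sum_range_pow_smul_of_eq_smul_add {R M : Type*} [Semiring R] [AddCommMonoid M]
    [Module R M] {d u : ℕ → M} {c : R} (h0 : d 0 = u 0) (hs : ∀ j, d (j + 1) = c • d j + u (j + 1))
    (r : ℕ) : d r = ∑ i ∈ range (r + 1), c ^ i • u (r - i) := by
  induction r with
  | zero => simp [h0]
  | succ r ih =>
    rw [sum_range_succ', hs, ih, smul_sum]
    simp [pow_succ', mul_smul, add_comm]

lemma norm_sum_smul_sq_le {α E : Type*} [SeminormedAddCommGroup E] [NormedSpace ℝ E]
    (s : Finset α) {a : α → ℝ} (ha : ∀ i ∈ s, 0 ≤ a i) (v : α → E) :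
    ‖∑ i ∈ s, a i • v i‖ ^ 2 ≤ (∑ i ∈ s, a i) * ∑ i ∈ s, a i * ‖v i‖ ^ 2 := by
  have hnorm : ‖∑ i ∈ s, a i • v i‖ ≤ ∑ i ∈ s, a i * ‖v i‖ :=
    (norm_sum_le _ _).trans_eq <| sum_congr rfl fun i hi => by
      rw [norm_smul, Real.norm_of_nonneg (ha i hi)]
  refine (pow_le_pow_left₀ (norm_nonneg _) hnorm 2).trans ?_
  exact sum_sq_le_sum_mul_sum_of_sq_le_mul s ha (fun i hi => mul_nonneg (ha i hi) (sq_nonneg _))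
    fun i _ => le_of_eq (by ring)

lemma sum_norm_sum_sq_le_card_mul {α β E : Type*} [SeminormedAddCommGroup E] [NormedSpace ℝ E]
    (s : Finset α) (t : Finset β) (v : α → β → E) :
    ∑ k ∈ t, ‖∑ m ∈ s, v m k‖ ^ 2 ≤ #s * ∑ m ∈ s, ∑ k ∈ t, ‖v m k‖ ^ 2 := by
  rw [sum_comm, mul_sum]
  exact sum_le_sum fun k _ => by
    simpa using norm_sum_smul_sq_le s (a := fun _ => 1) (fun _ _ => zero_le_one) (v · k)

namespace SoftPull

variable {ι E : Type*} [Fintype ι]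

section Module

variable [AddCommGroup E] [Module ℝ E]

noncomputable def mean : (ι → E) →ₗ[ℝ] E where
  toFun x := (Fintype.card ι : ℝ)⁻¹ • ∑ i, x i
  map_add' x y := by simp [sum_add_distrib]
  map_smul' a x := by simp [smul_sum, smul_comm a]

noncomputable def dev : (ι → E) →ₗ[ℝ] ι → E := LinearMap.id - LinearMap.pi fun _ => mean

lemma mean_apply (x : ι → E) : mean x = (Fintype.card ι : ℝ)⁻¹ • ∑ i, x i := rfl

lemma dev_apply (x : ι → E) (i : ι) : dev x i = x i - mean x := rfl

lemma mean_const [Nonempty ι] (v : E) : mean (fun _ : ι => v) = v := by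
  rw [mean_apply, sum_const, card_univ, ← Nat.cast_smul_eq_nsmul ℝ, smul_smul,
    inv_mul_cancel₀ (by simp), one_smul]

lemma dev_const [Nonempty ι] (v : E) : dev (fun _ : ι => v) = 0 := by
  funext i; simp [dev_apply, mean_const]

lemma dev_smul_add_smul_mean [Nonempty ι] (c : ℝ) (x : ι → E) :
    dev (c • x + (1 - c) • fun _ => mean x) = c • dev x := by
  rw [map_add, map_smul, map_smul, dev_const, smul_zero, add_zero]

end Module

variable [NormedAddCommGroup E] [InnerProductSpace ℝ E]

lemma sum_norm_dev_sq (x : ι → E) :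
    ∑ i, ‖dev x i‖ ^ 2 = ∑ i, ‖x i‖ ^ 2 - (Fintype.card ι : ℝ)⁻¹ * ‖∑ i, x i‖ ^ 2 := by
  simp only [dev_apply, mean_apply, norm_sub_sq_real, sum_add_distrib, sum_sub_distrib,
    ← mul_sum, ← sum_inner, inner_smul_right, real_inner_self_eq_norm_sq, norm_smul, sum_const,
    card_univ, nsmul_eq_mul, mul_pow, norm_inv, Real.norm_natCast]
  rcases eq_or_ne (Fintype.card ι : ℝ) 0 with h | h
  · simp [h]
  · field_simp; ring

lemma sum_norm_dev_sq_le (x : ι → E) : ∑ i, ‖dev x i‖ ^ 2 ≤ ∑ i, ‖x i‖ ^ 2 := by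
  rw [sum_norm_dev_sq, sub_le_self_iff]; positivity

theorem sum_norm_mix_sub_sq_le [Nonempty ι] {c η : ℝ} (hc : 0 ≤ c) {x y s : ℕ → ι → E} (v : E)
    (hx0 : x 0 = fun _ => v) (hy : ∀ j, y j = x j - η • s j)
    (hx : ∀ j, x (j + 1) = c • y j + (1 - c) • fun _ => mean (y j)) (r : ℕ) :
    ∑ k, ‖x (r + 1) k - y r k‖ ^ 2 ≤
      (1 - c) ^ 2 * (∑ i ∈ range (r + 1), c ^ i) * η ^ 2 *
        ∑ i ∈ range (r + 1), c ^ i * ∑ k, ‖s (r - i) k‖ ^ 2 := by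
  have hdev : dev (y r) = ∑ i ∈ range (r + 1), c ^ i • (-η) • dev (s (r - i)) := by
    refine eq_sum_range_pow_smul_of_eq_smul_add (d := fun j => dev (y j)) (c := c)
      (u := fun j => (-η) • dev (s j)) ?_ (fun j => ?_) r
    · rw [hy, map_sub, map_smul, hx0, dev_const, zero_sub, neg_smul]
    · rw [hy (j + 1), map_sub, map_smul, hx, dev_smul_add_smul_mean, neg_smul, sub_eq_add_neg]
  have hdisp : ∀ k, ‖x (r + 1) k - y r k‖ ^ 2 =
      (1 - c) ^ 2 * η ^ 2 * ‖∑ i ∈ range (r + 1), c ^ i • dev (s (r - i)) k‖ ^ 2 := fun k => by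
    have hk : y r k - mean (y r) = (-η) • ∑ i ∈ range (r + 1), c ^ i • dev (s (r - i)) k := by
      rw [← dev_apply, hdev, Finset.sum_apply, smul_sum]
      exact sum_congr rfl fun i _ => smul_comm _ _ _
    have : x (r + 1) k - y r k = -(1 - c) • (y r k - mean (y r)) := by
      rw [hx]; simp only [Pi.add_apply, Pi.smul_apply]; module
    rw [this, hk, smul_smul, norm_smul, mul_pow, Real.norm_eq_abs, sq_abs]; ring
  calc ∑ k, ‖x (r + 1) k - y r k‖ ^ 2
      = (1 - c) ^ 2 * η ^ 2 * ∑ k, ‖∑ i ∈ range (r + 1), c ^ i • dev (s (r - i)) k‖ ^ 2 := by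
        rw [mul_sum]; exact sum_congr rfl fun k _ => hdisp k
    _ ≤ (1 - c) ^ 2 * η ^ 2 * ∑ k, (∑ i ∈ range (r + 1), c ^ i) *
          ∑ i ∈ range (r + 1), c ^ i * ‖dev (s (r - i)) k‖ ^ 2 := by
        gcongr with k
        exact norm_sum_smul_sq_le _ (fun i _ => pow_nonneg hc i) _
    _ = (1 - c) ^ 2 * (∑ i ∈ range (r + 1), c ^ i) * η ^ 2 *
          ∑ i ∈ range (r + 1), c ^ i * ∑ k, ‖dev (s (r - i)) k‖ ^ 2 := by
        rw [← mul_sum, sum_comm]; simp_rw [← mul_sum]; ring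
    _ ≤ _ := by
        gcongr _ * ∑ i ∈ _, _ * ?_ with i
        exact sum_norm_dev_sq_le _

theorem sum_norm_mix_sub_sq_le_of_local_steps [Nonempty ι] {c η : ℝ} (hc : 0 ≤ c) {M : ℕ}
    {w g : ℕ → ℕ → ι → E} (v : E) (hinit : ∀ k, w 0 0 k = v)
    (hlocal : ∀ j, ∀ m < M, ∀ k, w j (m + 1) k = w j m k - η • g j m k)
    (hmix : ∀ j k, w (j + 1) 0 k = c • w j M k + (1 - c) • mean (w j M)) (r : ℕ) :
    ∑ k, ‖w (r + 1) 0 k - w r M k‖ ^ 2 ≤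
      ∑ i ∈ range (r + 1), (1 - c) ^ 2 * (∑ i ∈ range (r + 1), c ^ i) * η ^ 2 * M * c ^ i *
        ∑ m ∈ range M, ∑ k, ‖g (r - i) m k‖ ^ 2 := by
  refine (sum_norm_mix_sub_sq_le (η := η) hc v (x := (w · 0)) (y := (w · M))
    (s := fun j k => ∑ m ∈ range M, g j m k) (funext hinit)
    (fun j => funext fun k => eq_sub_smul_sum_of_forall_lt (u := (w j · k)) (hlocal j · · k))
    (fun j => funext (hmix j)) r).trans ?_
  rw [mul_sum]
  refine sum_le_sum fun i _ => ?_
  have := sum_norm_sum_sq_le_card_mul (range M) univ (g (r - i))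
  rw [card_range] at this
  calc _ ≤ (1 - c) ^ 2 * (∑ i ∈ range (r + 1), c ^ i) * η ^ 2 *
        (c ^ i * (M * ∑ m ∈ range M, ∑ k, ‖g (r - i) m k‖ ^ 2)) := by gcongr
    _ = _ := by ring

end SoftPull

section Expectation

variable {Ω : Type*} [MeasurableSpace Ω] {μ : Measure Ω}

lemma integral_le_sum_mul_of_le {α : Type*} {s : Finset α} {f : Ω → ℝ} {F : α → Ω → ℝ}
    {a : α → ℝ} {B : ℝ} (hf : Integrable f μ) (hF : ∀ i ∈ s, Integrable (F i) μ)
    (ha : ∀ i ∈ s, 0 ≤ a i) (hfF : ∀ ω, f ω ≤ ∑ i ∈ s, a i * F i ω)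
    (hB : ∀ i ∈ s, ∫ ω, F i ω ∂μ ≤ B) :
    ∫ ω, f ω ∂μ ≤ (∑ i ∈ s, a i) * B := by
  have haF : ∀ i ∈ s, Integrable (fun ω => a i * F i ω) μ := fun i hi => (hF i hi).const_mul _
  calc ∫ ω, f ω ∂μ ≤ ∫ ω, ∑ i ∈ s, a i * F i ω ∂μ :=
        integral_mono hf (integrable_finsetSum _ haF) hfF
    _ = ∑ i ∈ s, a i * ∫ ω, F i ω ∂μ := by
        rw [integral_finsetSum _ haF]; simp only [integral_const_mul]
    _ ≤ ∑ i ∈ s, a i * B := sum_le_sum fun i hi => mul_le_mul_of_nonneg_left (hB i hi) (ha i hi)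
    _ = (∑ i ∈ s, a i) * B := (sum_mul ..).symm

lemma integral_sum_sum_le {ι κ : Type*} [Fintype ι] [Nonempty ι] {s : Finset κ}
    {F : κ → ι → Ω → ℝ} {B : ℝ}
    (hF : ∀ m ∈ s, ∀ k, Integrable (F m k) μ)
    (hB : ∀ m ∈ s, (1 / (Fintype.card ι : ℝ)) * ∑ k, ∫ ω, F m k ω ∂μ ≤ B) :
    ∫ ω, ∑ m ∈ s, ∑ k, F m k ω ∂μ ≤ #s * (Fintype.card ι * B) := by
  rw [integral_finsetSum _ fun m hm => integrable_finsetSum _ fun k _ => hF m hm k]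
  calc ∑ m ∈ s, ∫ ω, ∑ k, F m k ω ∂μ = ∑ m ∈ s, ∑ k, ∫ ω, F m k ω ∂μ :=
        sum_congr rfl fun m hm => integral_finsetSum _ fun k _ => hF m hm k
    _ ≤ ∑ _m ∈ s, (Fintype.card ι * B) := sum_le_sum fun m hm => by
        have := hB m hm
        rwa [one_div, inv_mul_le_iff₀ (by positivity)] at this
    _ = #s * (Fintype.card ι * B) := by rw [sum_const, nsmul_eq_mul]

end Expectation

theorem stmt_5_general {E : Type*} [NormedAddCommGroup E] [InnerProductSpace ℝ E]
    {Ω : Type*} [MeasurableSpace Ω] (μ : Measure Ω)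
    (K M : ℕ) (hK : 2 ≤ K) (lam η G σ : ℝ)
    (hlam0 : 1 / (K : ℝ) ≤ lam) (w₀ : E)
    (w g : ℕ → ℕ → Fin K → Ω → E)
    (hinit : ∀ k ω, w 0 0 k ω = w₀)
    (hlocal : ∀ r, ∀ m < M, ∀ k ω, w r (m + 1) k ω = w r m k ω - η • g r m k ω)
    (hmix : ∀ r k ω, w (r + 1) 0 k ω =
      (((K : ℝ) * lam - 1) / ((K : ℝ) - 1)) • w r M k ω +
        (1 - ((K : ℝ) * lam - 1) / ((K : ℝ) - 1)) • ((1 / (K : ℝ)) • ∑ k', w r M k' ω))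
    (r : ℕ)
    (hgI : ∀ r' ≤ r, ∀ m < M, ∀ k, Integrable (fun ω => ‖g r' m k ω‖ ^ 2) μ)
    (hdispI : ∀ k, Integrable (fun ω => ‖w (r + 1) 0 k ω - w r M k ω‖ ^ 2) μ)
    (hbound : ∀ r' ≤ r, ∀ m < M,
      (1 / (K : ℝ)) * ∑ k, ∫ ω, ‖g r' m k ω‖ ^ 2 ∂μ ≤ 2 * (G ^ 2 + σ ^ 2)) :
    (1 / (K : ℝ)) * ∑ k, ∫ ω, ‖w (r + 1) 0 k ω - w r M k ω‖ ^ 2 ∂μ ≤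
      (1 - (((K : ℝ) * lam - 1) / ((K : ℝ) - 1)) ^ (r + 1)) ^ 2 *
        (2 * M ^ 2 * (G ^ 2 + σ ^ 2) * η ^ 2) := by
  set c := ((K : ℝ) * lam - 1) / ((K : ℝ) - 1)
  have hK1 : (1 : ℝ) < K := by exact_mod_cast hK
  have hc0 : 0 ≤ c := by
    refine div_nonneg ?_ (by linarith)
    rwa [div_le_iff₀' (by linarith), ← sub_nonneg] at hlam0
  have : Nonempty (Fin K) := ⟨⟨0, by omega⟩⟩
  set A := ∑ i ∈ range (r + 1), c ^ i
  have hgeom : (1 - c) * A = 1 - c ^ (r + 1) := by linear_combination -(geom_sum_mul c (r + 1))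
  set C := (1 - c) ^ 2 * A * η ^ 2 * M with hCdef
  have hpt : ∀ ω, ∑ k, ‖w (r + 1) 0 k ω - w r M k ω‖ ^ 2 ≤
      ∑ i ∈ range (r + 1), C * c ^ i * ∑ m ∈ range M, ∑ k, ‖g (r - i) m k ω‖ ^ 2 := fun ω =>
    SoftPull.sum_norm_mix_sub_sq_le_of_local_steps (w := (w · · · ω)) (g := (g · · · ω)) hc0 w₀
      (hinit · ω) (hlocal · · · · ω)
      (fun j k => by simp [hmix, SoftPull.mean_apply]) r
  calc (1 / (K : ℝ)) * ∑ k, ∫ ω, ‖w (r + 1) 0 k ω - w r M k ω‖ ^ 2 ∂μ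
      = (1 / K) * ∫ ω, ∑ k, ‖w (r + 1) 0 k ω - w r M k ω‖ ^ 2 ∂μ := by
        rw [integral_finsetSum _ fun k _ => hdispI k]
    _ ≤ (1 / K) * ((∑ i ∈ range (r + 1), C * c ^ i) * (M * (K * (2 * (G ^ 2 + σ ^ 2))))) := by
        gcongr
        refine integral_le_sum_mul_of_le (integrable_finsetSum _ fun k _ => hdispI k)
          (fun i _ => ?_) (fun i _ => by positivity) hpt (fun i _ => ?_)
        · exact integrable_finsetSum _ fun m hm => integrable_finsetSum _ fun k _ =>
            hgI (r - i) (Nat.sub_le r i) m (mem_range.1 hm) k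
        · simpa using integral_sum_sum_le (s := range M)
            (fun m hm k => hgI (r - i) (Nat.sub_le r i) m (mem_range.1 hm) k)
            (fun m hm => by simpa using hbound (r - i) (Nat.sub_le r i) m (mem_range.1 hm))
    _ = _ := by rw [← mul_sum, ← hgeom, hCdef]; field_simp; ring

/-- Expected squared SoftPull mixing displacement: with `λ' = (Kλ−1)/(K−1)` and
`λ ∈ [1/K, 1)`, `(1/K)·Σ_k E‖w^{r+1,0}_k − w^{r,M}_k‖² ≤ (1 − (λ')^{r+1})²·2M²(G²+σ²)η²`. -/
theorem stmt_5 {E : Type*} [NormedAddCommGroup E] [InnerProductSpace ℝ E]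
    {Ω : Type*} [MeasurableSpace Ω] (μ : Measure Ω) [IsProbabilityMeasure μ]
    (K M : ℕ) (hK : 2 ≤ K) (hM : 1 ≤ M) (lam η G σ : ℝ) (hη : 0 < η)
    (hlam0 : 1 / (K : ℝ) ≤ lam) (hlam1 : lam < 1) (w₀ : E)
    (w g : ℕ → ℕ → Fin K → Ω → E)
    (hinit : ∀ k ω, w 0 0 k ω = w₀)
    (hlocal : ∀ r, ∀ m < M, ∀ k ω, w r (m + 1) k ω = w r m k ω - η • g r m k ω)
    (hmix : ∀ r k ω, w (r + 1) 0 k ω =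
      (((K : ℝ) * lam - 1) / ((K : ℝ) - 1)) • w r M k ω +
        (1 - ((K : ℝ) * lam - 1) / ((K : ℝ) - 1)) • ((1 / (K : ℝ)) • ∑ k', w r M k' ω))
    (r : ℕ)
    (hgI : ∀ r' ≤ r, ∀ m < M, ∀ k, Integrable (fun ω => ‖g r' m k ω‖ ^ 2) μ)
    (hdispI : ∀ k, Integrable (fun ω => ‖w (r + 1) 0 k ω - w r M k ω‖ ^ 2) μ)
    (hbound : ∀ r' ≤ r, ∀ m < M,
      (1 / (K : ℝ)) * ∑ k, ∫ ω, ‖g r' m k ω‖ ^ 2 ∂μ ≤ 2 * (G ^ 2 + σ ^ 2)) :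
    (1 / (K : ℝ)) * ∑ k, ∫ ω, ‖w (r + 1) 0 k ω - w r M k ω‖ ^ 2 ∂μ ≤
      (1 - (((K : ℝ) * lam - 1) / ((K : ℝ) - 1)) ^ (r + 1)) ^ 2 *
        (2 * M ^ 2 * (G ^ 2 + σ ^ 2) * η ^ 2) :=
  stmt_5_general μ K M hK lam η G σ hlam0 w₀ w g hinit hlocal hmix r hgI hdispI hbound
end

section
/- Let E be a real Hilbert space, f : E → ℝ differentiable with L-Lipschitz gradient (L > 0), 0 < η ≤ 1/L, and M ≥ 1. Let w^{r,0}, …, w^{r,M} and g^{r,0}, …, g^{r,M−1} be random vectors in E with w^{r,m+1} = w^{r,m} − η·g^{r,m}, such that for every m: E⟨∇f(w^{r,m}), g^{r,m}⟩ = E‖∇f(w^{r,m})‖², E‖g^{r,m} − ∇f(w^{r,m})‖² ≤ σ², and E‖g^{r,M−1}‖² ≤ 2(G² + σ²). Let w^{r+1,0} be any further random vector in E. Then Σ_{m=0}^{M−1} E‖∇f(w^{r,m})‖² ≤ (4/η)·E[f(w^{r,0}) − f(w^{r+1,0})] + 2MηLσ² + 2η²L²(G² + σ²) + (8/η² + 2L/η)·E‖w^{r+1,0}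 − w^{r,M}‖². -/
open MeasureTheory
open scoped RealInnerProductSpace

/-!
Each local step is a descent step: by the descent lemma
`f (w - η • g) ≤ f w - η ⟪∇f w, g⟫ + (L η² / 2) ‖g‖²`, and unbiasedness turns `E‖g‖²` into
`E‖g - ∇f w‖² + E‖∇f w‖² ≤ σ² + E‖∇f w‖²`, so for `η L ≤ 1` every step lowers `E f` by at least
`(η / 2) E‖∇f(w^{r,m})‖² - L η² σ² / 2`; these bounds telescope. The mixing step raises `f` by at
most `⟪∇f(w^{r,M}), d⟫ + (L / 2) ‖d‖²` with `d = w^{r+1,0} - w^{r,M}`. Young's inequality and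
`‖∇f(w^{r,M})‖² ≤ 2 ‖∇f(w^{r,M-1})‖² + 2 η² L² ‖g^{r,M-1}‖²` bound this by a quarter of the last
gradient term, which is absorbed into the left-hand side at the cost of halving it.
-/

section
variable {E : Type*} [NormedAddCommGroup E] [InnerProductSpace ℝ E]
  {f : E → ℝ} {f' : E → E} {L : ℝ}

theorem image_le_add_inner_add_of_lipschitz_gradient [CompleteSpace E]
    (hgrad : ∀ x, HasGradientAt f (f' x) x) (hlip : ∀ x y, ‖f' x - f' y‖ ≤ L * ‖x - y‖)
    (x y : E) : f y ≤ f x + ⟪f' x, y - x⟫ + L / 2 * ‖y - x‖ ^ 2 := by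
  set v := y - x
  let φ : ℝ → ℝ := fun t => f (x + t • v) - t * ⟪f' x, v⟫ - L / 2 * t ^ 2 * ‖v‖ ^ 2
  have hφ : ∀ t, HasDerivAt φ (⟪f' (x + t • v), v⟫ - ⟪f' x, v⟫ - L * t * ‖v‖ ^ 2) t := by
    intro t
    have hline : HasDerivAt (fun s : ℝ => x + s • v) v t := by
      simpa using ((hasDerivAt_id t).smul_const v).const_add x
    have hcomp := (hgrad (x + t • v)).hasFDerivAt.comp_hasDerivAt t hline
    have hφt := (hcomp.sub ((hasDerivAt_id t).mul_const ⟪f' x, v⟫)).sub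
      ((((hasDerivAt_id t).pow 2).const_mul (L / 2)).mul_const (‖v‖ ^ 2))
    refine hφt.congr_deriv ?_
    simp only [InnerProductSpace.toDual_apply_apply, id]
    ring
  have hφ_nonpos : ∀ t, 0 ≤ t → ⟪f' (x + t • v), v⟫ - ⟪f' x, v⟫ - L * t * ‖v‖ ^ 2 ≤ 0 := by
    intro t ht
    have hstep : ‖f' (x + t • v) - f' x‖ ≤ L * (t * ‖v‖) := by
      simpa [norm_smul, abs_of_nonneg ht] using hlip (x + t • v) x
    have := calc ⟪f' (x + t • v), v⟫ - ⟪f' x, v⟫ = ⟪f' (x + t • v) - f' x, v⟫ :=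
          (inner_sub_left _ _ _).symm
      _ ≤ ‖f' (x + t • v) - f' x‖ * ‖v‖ := real_inner_le_norm _ _
      _ ≤ L * (t * ‖v‖) * ‖v‖ := by gcongr
    linarith
  have hanti : AntitoneOn φ (Set.Ici 0) :=
    antitoneOn_of_hasDerivWithinAt_nonpos (convex_Ici 0)
      (fun t _ => (hφ t).continuousAt.continuousWithinAt) (fun t _ => (hφ t).hasDerivWithinAt)
      (fun t ht => hφ_nonpos t (by simpa using interior_subset ht))
  have := hanti Set.self_mem_Ici (Set.mem_Ici.mpr zero_le_one) zero_le_one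
  have hy : x + v = y := add_sub_cancel x y
  simp only [φ, one_smul, zero_smul, add_zero, hy] at this
  linarith

theorem image_sub_smul_le_of_lipschitz_gradient [CompleteSpace E]
    (hgrad : ∀ x, HasGradientAt f (f' x) x) (hlip : ∀ x y, ‖f' x - f' y‖ ≤ L * ‖x - y‖)
    (η : ℝ) (x g : E) :
    f (x - η • g) ≤ f x - η * ⟪f' x, g⟫ + L * η ^ 2 / 2 * ‖g‖ ^ 2 := by
  have h := image_le_add_inner_add_of_lipschitz_gradient hgrad hlip x (x - η • g)
  rw [sub_sub_cancel_left, inner_neg_right, real_inner_smul_right, norm_neg, norm_smul,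
    Real.norm_eq_abs, mul_pow, sq_abs] at h
  linarith

theorem image_sub_image_sub_smul_le_of_lipschitz_gradient [CompleteSpace E]
    (hgrad : ∀ x, HasGradientAt f (f' x) x) (hlip : ∀ x y, ‖f' x - f' y‖ ≤ L * ‖x - y‖)
    {η : ℝ} (hη : 0 < η) (x g y : E) :
    f y - f (x - η • g) ≤ η / 4 * ‖f' x‖ ^ 2 + η ^ 3 * L ^ 2 / 4 * ‖g‖ ^ 2
      + (2 / η + L / 2) * ‖y - (x - η • g)‖ ^ 2 := by
  set x' := x - η • g
  have hdescent := image_le_add_inner_add_of_lipschitz_gradient hgrad hlip x' y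
  have hyoung : ⟪f' x', y - x'⟫ ≤ η / 8 * ‖f' x'‖ ^ 2 + 2 / η * ‖y - x'‖ ^ 2 := by
    have h := two_mul_le_add_mul_sq (a := ‖f' x'‖) (b := ‖y - x'‖) (by positivity : 0 < η / 4)
    rw [inv_div] at h
    linarith [real_inner_le_norm (f' x') (y - x'),
      show 4 / η * ‖y - x'‖ ^ 2 = 2 * (2 / η * ‖y - x'‖ ^ 2) by ring]
  have hdrift : ‖f' x'‖ ≤ ‖f' x‖ + L * η * ‖g‖ := by
    have hlipx := hlip x' x
    rw [show x' - x = -(η • g) by simp [x'], norm_neg, norm_smul, Real.norm_eq_abs,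
      abs_of_pos hη] at hlipx
    calc ‖f' x'‖ ≤ ‖f' x‖ + ‖f' x' - f' x‖ := norm_le_norm_add_norm_sub' _ _
      _ ≤ ‖f' x‖ + L * η * ‖g‖ := by linarith
  have hdrift_sq : ‖f' x'‖ ^ 2 ≤ 2 * ‖f' x‖ ^ 2 + 2 * η ^ 2 * L ^ 2 * ‖g‖ ^ 2 := by
    calc ‖f' x'‖ ^ 2 ≤ (‖f' x‖ + L * η * ‖g‖) ^ 2 := by gcongr
      _ ≤ 2 * (‖f' x‖ ^ 2 + (L * η * ‖g‖) ^ 2) := add_sq_le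
      _ = 2 * ‖f' x‖ ^ 2 + 2 * η ^ 2 * L ^ 2 * ‖g‖ ^ 2 := by ring
  linarith [mul_le_mul_of_nonneg_left hdrift_sq (by positivity : 0 ≤ η / 8)]

theorem norm_sq_eq_norm_sub_sq_add_inner (x y : E) :
    ‖y‖ ^ 2 = ‖y - x‖ ^ 2 + 2 * ⟪x, y⟫ - ‖x‖ ^ 2 := by
  rw [norm_sub_sq_real, real_inner_comm]
  ring

variable {Ω : Type*} [MeasurableSpace Ω] {μ : Measure Ω}

theorem integrable_norm_sq_of_inner {X Y : Ω → E}
    (hinner : Integrable (fun ω => ⟪X ω, Y ω⟫) μ) (hX : Integrable (fun ω => ‖X ω‖ ^ 2) μ)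
    (hvar : Integrable (fun ω => ‖Y ω - X ω‖ ^ 2) μ) :
    Integrable (fun ω => ‖Y ω‖ ^ 2) μ := by
  rw [funext fun ω => norm_sq_eq_norm_sub_sq_add_inner (X ω) (Y ω)]
  exact (hvar.add (hinner.const_mul 2)).sub hX

theorem integral_norm_sq_eq_of_unbiased {X Y : Ω → E}
    (hinner : Integrable (fun ω => ⟪X ω, Y ω⟫) μ) (hX : Integrable (fun ω => ‖X ω‖ ^ 2) μ)
    (hvar : Integrable (fun ω => ‖Y ω - X ω‖ ^ 2) μ)
    (hunbiased : ∫ ω, ⟪X ω, Y ω⟫ ∂μ = ∫ ω, ‖X ω‖ ^ 2 ∂μ) :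
    ∫ ω, ‖Y ω‖ ^ 2 ∂μ = ∫ ω, ‖Y ω - X ω‖ ^ 2 ∂μ + ∫ ω, ‖X ω‖ ^ 2 ∂μ := by
  have hsum : Integrable (fun ω => ‖Y ω - X ω‖ ^ 2 + 2 * ⟪X ω, Y ω⟫) μ :=
    hvar.add (hinner.const_mul 2)
  rw [funext fun ω => norm_sq_eq_norm_sub_sq_add_inner (X ω) (Y ω), integral_sub hsum hX,
    integral_add hvar (hinner.const_mul 2), integral_const_mul, hunbiased]
  ring

theorem integral_image_sub_smul_le [CompleteSpace E]
    (hgrad : ∀ x, HasGradientAt f (f' x) x) (hlip : ∀ x y, ‖f' x - f' y‖ ≤ L * ‖x - y‖)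
    (hL : 0 ≤ L) {η σ : ℝ} (hη : 0 ≤ η) (hηL : η * L ≤ 1) {x x' g : Ω → E}
    (hx' : ∀ ω, x' ω = x ω - η • g ω)
    (hfx : Integrable (fun ω => f (x ω)) μ) (hfx' : Integrable (fun ω => f (x' ω)) μ)
    (hinnerI : Integrable (fun ω => ⟪f' (x ω), g ω⟫) μ)
    (hgradI : Integrable (fun ω => ‖f' (x ω)‖ ^ 2) μ)
    (hvarI : Integrable (fun ω => ‖g ω - f' (x ω)‖ ^ 2) μ)
    (hunbiased : ∫ ω, ⟪f' (x ω), g ω⟫ ∂μ = ∫ ω, ‖f' (x ω)‖ ^ 2 ∂μ)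
    (hvar : ∫ ω, ‖g ω - f' (x ω)‖ ^ 2 ∂μ ≤ σ ^ 2) :
    η / 2 * ∫ ω, ‖f' (x ω)‖ ^ 2 ∂μ ≤
      ∫ ω, f (x ω) ∂μ - ∫ ω, f (x' ω) ∂μ + L * η ^ 2 * σ ^ 2 / 2 := by
  have hgI := integrable_norm_sq_of_inner hinnerI hgradI hvarI
  have hdI : Integrable (fun ω => f (x ω) - η * ⟪f' (x ω), g ω⟫) μ :=
    hfx.sub (hinnerI.const_mul η)
  have hRI : Integrable (fun ω => f (x ω) - η * ⟪f' (x ω), g ω⟫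
      + L * η ^ 2 / 2 * ‖g ω‖ ^ 2) μ := hdI.add (hgI.const_mul _)
  have hmono := integral_mono hfx' hRI fun ω => by
    simpa only [hx'] using image_sub_smul_le_of_lipschitz_gradient hgrad hlip η (x ω) (g ω)
  rw [integral_add hdI (hgI.const_mul _), integral_sub hfx (hinnerI.const_mul η),
    integral_const_mul, integral_const_mul, hunbiased,
    integral_norm_sq_eq_of_unbiased hinnerI hgradI hvarI hunbiased] at hmono
  have hA : 0 ≤ ∫ ω, ‖f' (x ω)‖ ^ 2 ∂μ := integral_nonneg fun ω => sq_nonneg _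
  linarith [mul_le_mul_of_nonneg_left hvar (by positivity : 0 ≤ L * η ^ 2 / 2),
    mul_nonneg (mul_nonneg hη hA) (sub_nonneg.mpr hηL)]

theorem sum_integral_norm_sq_gradient_le [CompleteSpace E]
    (hgrad : ∀ x, HasGradientAt f (f' x) x) (hlip : ∀ x y, ‖f' x - f' y‖ ≤ L * ‖x - y‖)
    (hL : 0 ≤ L) {η σ : ℝ} (hη : 0 ≤ η) (hηL : η * L ≤ 1) {M : ℕ} {w g : ℕ → Ω → E}
    (hstep : ∀ m < M, ∀ ω, w (m + 1) ω = w m ω - η • g m ω)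
    (hfI : ∀ m ≤ M, Integrable (fun ω => f (w m ω)) μ)
    (hinnerI : ∀ m < M, Integrable (fun ω => ⟪f' (w m ω), g m ω⟫) μ)
    (hgradI : ∀ m < M, Integrable (fun ω => ‖f' (w m ω)‖ ^ 2) μ)
    (hvarI : ∀ m < M, Integrable (fun ω => ‖g m ω - f' (w m ω)‖ ^ 2) μ)
    (hunbiased : ∀ m < M, ∫ ω, ⟪f' (w m ω), g m ω⟫ ∂μ = ∫ ω, ‖f' (w m ω)‖ ^ 2 ∂μ)
    (hvar : ∀ m < M, ∫ ω, ‖g m ω - f' (w m ω)‖ ^ 2 ∂μ ≤ σ ^ 2) :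
    η / 2 * ∑ m ∈ Finset.range M, ∫ ω, ‖f' (w m ω)‖ ^ 2 ∂μ ≤
      ∫ ω, f (w 0 ω) ∂μ - ∫ ω, f (w M ω) ∂μ + M * (L * η ^ 2 * σ ^ 2 / 2) := by
  have h := Finset.sum_le_sum fun m (hm : m ∈ Finset.range M) =>
    have hm := Finset.mem_range.mp hm
    integral_image_sub_smul_le hgrad hlip hL hη hηL (hstep m hm) (hfI m hm.le) (hfI (m + 1) hm)
      (hinnerI m hm) (hgradI m hm) (hvarI m hm) (hunbiased m hm) (hvar m hm)
  rwa [← Finset.mul_sum, Finset.sum_add_distrib,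
    Finset.sum_range_sub' (fun m => ∫ ω, f (w m ω) ∂μ), Finset.sum_const, Finset.card_range,
    nsmul_eq_mul] at h

theorem integral_image_sub_integral_image_sub_smul_le [CompleteSpace E]
    (hgrad : ∀ x, HasGradientAt f (f' x) x) (hlip : ∀ x y, ‖f' x - f' y‖ ≤ L * ‖x - y‖)
    {η : ℝ} (hη : 0 < η) {x x' g y : Ω → E} (hx' : ∀ ω, x' ω = x ω - η • g ω)
    (hfx' : Integrable (fun ω => f (x' ω)) μ) (hfy : Integrable (fun ω => f (y ω)) μ)
    (hgradI : Integrable (fun ω => ‖f' (x ω)‖ ^ 2) μ)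
    (hgI : Integrable (fun ω => ‖g ω‖ ^ 2) μ)
    (hdispI : Integrable (fun ω => ‖y ω - x' ω‖ ^ 2) μ) :
    ∫ ω, f (y ω) ∂μ - ∫ ω, f (x' ω) ∂μ ≤
      η / 4 * ∫ ω, ‖f' (x ω)‖ ^ 2 ∂μ + η ^ 3 * L ^ 2 / 4 * ∫ ω, ‖g ω‖ ^ 2 ∂μ
        + (2 / η + L / 2) * ∫ ω, ‖y ω - x' ω‖ ^ 2 ∂μ := by
  have hI : Integrable (fun ω => η / 4 * ‖f' (x ω)‖ ^ 2 + η ^ 3 * L ^ 2 / 4 * ‖g ω‖ ^ 2) μ :=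
    (hgradI.const_mul _).add (hgI.const_mul _)
  have hmono := integral_mono (f := fun ω => f (y ω) - f (x' ω))
    (g := fun ω => η / 4 * ‖f' (x ω)‖ ^ 2 + η ^ 3 * L ^ 2 / 4 * ‖g ω‖ ^ 2
      + (2 / η + L / 2) * ‖y ω - x' ω‖ ^ 2)
    (hfy.sub hfx') (hI.add (hdispI.const_mul _)) fun ω => by
      simpa only [hx'] using
        image_sub_image_sub_smul_le_of_lipschitz_gradient hgrad hlip hη (x ω) (g ω) (y ω)
  rwa [integral_sub hfy hfx', integral_add hI (hdispI.const_mul _),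
    integral_add (hgradI.const_mul _) (hgI.const_mul _), integral_const_mul, integral_const_mul,
    integral_const_mul] at hmono
end

theorem stmt_11_general {E : Type*} [NormedAddCommGroup E] [InnerProductSpace ℝ E] [CompleteSpace E]
    {Ω : Type*} [MeasurableSpace Ω] (μ : Measure Ω)
    (f : E → ℝ) (f' : E → E) (L η σ G : ℝ) (hL : 0 < L)
    (hgrad : ∀ x, HasGradientAt f (f' x) x)
    (hlip : ∀ x y, ‖f' x - f' y‖ ≤ L * ‖x - y‖)
    (hη0 : 0 < η) (hη1 : η ≤ 1 / L)
    (M : ℕ) (hM : 1 ≤ M) (w : ℕ → Ω → E) (g : ℕ → Ω → E) (wnext : Ω → E)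
    (hstep : ∀ m < M, ∀ ω, w (m + 1) ω = w m ω - η • g m ω)
    (hfI : ∀ m ≤ M, Integrable (fun ω => f (w m ω)) μ)
    (hfnextI : Integrable (fun ω => f (wnext ω)) μ)
    (hinnerI : ∀ m < M, Integrable (fun ω => ⟪f' (w m ω), g m ω⟫) μ)
    (hgradI : ∀ m < M, Integrable (fun ω => ‖f' (w m ω)‖ ^ 2) μ)
    (hvarI : ∀ m < M, Integrable (fun ω => ‖g m ω - f' (w m ω)‖ ^ 2) μ)
    (hglastI : Integrable (fun ω => ‖g (M - 1) ω‖ ^ 2) μ)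
    (hdispI : Integrable (fun ω => ‖wnext ω - w M ω‖ ^ 2) μ)
    (hunbiased : ∀ m < M,
      ∫ ω, ⟪f' (w m ω), g m ω⟫ ∂μ = ∫ ω, ‖f' (w m ω)‖ ^ 2 ∂μ)
    (hvar : ∀ m < M, ∫ ω, ‖g m ω - f' (w m ω)‖ ^ 2 ∂μ ≤ σ ^ 2)
    (hglast : ∫ ω, ‖g (M - 1) ω‖ ^ 2 ∂μ ≤ 2 * (G ^ 2 + σ ^ 2)) :
    ∑ m ∈ Finset.range M, ∫ ω, ‖f' (w m ω)‖ ^ 2 ∂μ ≤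
      (4 / η) * ∫ ω, (f (w 0 ω) - f (wnext ω)) ∂μ + 2 * M * η * L * σ ^ 2 +
        2 * η ^ 2 * L ^ 2 * (G ^ 2 + σ ^ 2) +
        (8 / η ^ 2 + 2 * L / η) * ∫ ω, ‖wnext ω - w M ω‖ ^ 2 ∂μ := by
  have hηL : η * L ≤ 1 := (le_div_iff₀ hL).mp hη1
  have hlast : M - 1 < M := by omega
  have hlocal := sum_integral_norm_sq_gradient_le hgrad hlip hL.le hη0.le hηL hstep hfI hinnerI
    hgradI hvarI hunbiased hvar
  have hmix := integral_image_sub_integral_image_sub_smul_le hgrad hlip hη0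
    (fun ω => by simpa [Nat.sub_add_cancel hM] using hstep (M - 1) hlast ω) (hfI M le_rfl)
    hfnextI (hgradI _ hlast) hglastI hdispI
  have hlast_le_sum : ∫ ω, ‖f' (w (M - 1) ω)‖ ^ 2 ∂μ ≤
      ∑ m ∈ Finset.range M, ∫ ω, ‖f' (w m ω)‖ ^ 2 ∂μ :=
    Finset.single_le_sum (f := fun m => ∫ ω, ‖f' (w m ω)‖ ^ 2 ∂μ)
      (fun m _ => integral_nonneg fun ω => sq_nonneg _) (Finset.mem_range.mpr hlast)
  rw [integral_sub (hfI 0 (Nat.zero_le M)) hfnextI]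
  have hglast_scaled := mul_le_mul_of_nonneg_left hglast (by positivity : 0 ≤ η ^ 3 * L ^ 2 / 4)
  set S := ∑ m ∈ Finset.range M, ∫ ω, ‖f' (w m ω)‖ ^ 2 ∂μ
  have hkey : η / 4 * S ≤ ∫ ω, f (w 0 ω) ∂μ - ∫ ω, f (wnext ω) ∂μ
      + M * (L * η ^ 2 * σ ^ 2 / 2) + η ^ 3 * L ^ 2 / 2 * (G ^ 2 + σ ^ 2)
      + (2 / η + L / 2) * ∫ ω, ‖wnext ω - w M ω‖ ^ 2 ∂μ := by
    linarith [mul_le_mul_of_nonneg_left hlast_le_sum (by positivity : 0 ≤ η / 4)]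
  refine le_of_mul_le_mul_left (hkey.trans_eq ?_) (by positivity : 0 < η / 4)
  field_simp
  ring

/-- One round of `M` local stochastic gradient steps on an `L`-smooth function followed by
an arbitrary server mixing step `w^{r+1,0}`:
`Σ_{m<M} E‖∇f(w^{r,m})‖² ≤ (4/η)·E[f(w^{r,0}) − f(w^{r+1,0})] + 2MηLσ²
  + 2η²L²(G²+σ²) + (8/η² + 2L/η)·E‖w^{r+1,0} − w^{r,M}‖²`. -/
theorem stmt_11 {E : Type*} [NormedAddCommGroup E] [InnerProductSpace ℝ E] [CompleteSpace E]
    {Ω : Type*} [MeasurableSpace Ω] (μ : Measure Ω) [IsProbabilityMeasure μ]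
    (f : E → ℝ) (f' : E → E) (L η σ G : ℝ) (hL : 0 < L)
    (hgrad : ∀ x, HasGradientAt f (f' x) x)
    (hlip : ∀ x y, ‖f' x - f' y‖ ≤ L * ‖x - y‖)
    (hη0 : 0 < η) (hη1 : η ≤ 1 / L)
    (M : ℕ) (hM : 1 ≤ M) (w : ℕ → Ω → E) (g : ℕ → Ω → E) (wnext : Ω → E)
    (hstep : ∀ m < M, ∀ ω, w (m + 1) ω = w m ω - η • g m ω)
    (hfI : ∀ m ≤ M, Integrable (fun ω => f (w m ω)) μ)
    (hfnextI : Integrable (fun ω => f (wnext ω)) μ)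
    (hinnerI : ∀ m < M, Integrable (fun ω => ⟪f' (w m ω), g m ω⟫) μ)
    (hgradI : ∀ m < M, Integrable (fun ω => ‖f' (w m ω)‖ ^ 2) μ)
    (hvarI : ∀ m < M, Integrable (fun ω => ‖g m ω - f' (w m ω)‖ ^ 2) μ)
    (hglastI : Integrable (fun ω => ‖g (M - 1) ω‖ ^ 2) μ)
    (hdispI : Integrable (fun ω => ‖wnext ω - w M ω‖ ^ 2) μ)
    (hunbiased : ∀ m < M,
      ∫ ω, ⟪f' (w m ω), g m ω⟫ ∂μ = ∫ ω, ‖f' (w m ω)‖ ^ 2 ∂μ)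
    (hvar : ∀ m < M, ∫ ω, ‖g m ω - f' (w m ω)‖ ^ 2 ∂μ ≤ σ ^ 2)
    (hglast : ∫ ω, ‖g (M - 1) ω‖ ^ 2 ∂μ ≤ 2 * (G ^ 2 + σ ^ 2)) :
    ∑ m ∈ Finset.range M, ∫ ω, ‖f' (w m ω)‖ ^ 2 ∂μ ≤
      (4 / η) * ∫ ω, (f (w 0 ω) - f (wnext ω)) ∂μ + 2 * M * η * L * σ ^ 2 +
        2 * η ^ 2 * L ^ 2 * (G ^ 2 + σ ^ 2) +
        (8 / η ^ 2 + 2 * L / η) * ∫ ω, ‖wnext ω - w M ω‖ ^ 2 ∂μ :=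
  stmt_11_general μ f f' L η σ G hL hgrad hlip hη0 hη1 M hM w g wnext hstep hfI hfnextI hinnerI
    hgradI hvarI hglastI hdispI hunbiased hvar hglast
end

section
/- Let E be a real Hilbert space, f_k : E → ℝ differentiable with L-Lipschitz gradient (L > 0), 0 < η ≤ 1/L, K ≥ 2, M ≥ 1, R ≥ 1, and λ ∈ [1/K, 1]. Consider SoftPull iterates for client k on a probability space: random vectors w^{r,m}_k with local steps w^{r,m+1}_k = w^{r,m}_k − η·g^{r,m}_k (0 ≤ m ≤ M−1) and mixing w^{r+1,0}_k = λ·w^{r,M}_k + ((1−λ)/(K−1))·Σ_{k'≠k} w^{r,M}_{k'}, where for every r, m: E⟨∇f_k(w^{r,m}_k), g^{r,m}_k⟩ = E‖∇f_k(w^{r,m}_k)‖², E‖g^{r,m}_k − ∇f_k(w^{r,m}_k)‖² ≤ σ², and E‖g^{r,m}_k‖² ≤ 2(G² + σ²). Then (1/(RM))·Σ_{r=0}^{R−1} Σ_{m=0}^{M−1} E‖∇f_k(w^{r,m}_k)‖² ≤ (4/(ηRM))·E[f_k(w^{0,0}_k) − f_k(w^{R,0}_k)] + 2ηLσ² + 2η²L²(G²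 + σ²)/M + (1/(RM))·(8/η² + 2L/η)·((1−λ)²K²/(K−1)²)·Σ_{r=0}^{R−1} E‖w^{r,M}_k − w̄^{r,M}‖², where w̄^{r,M} = (1/K)·Σ_{k'=1}^K w^{r,M}_{k'}. -/
/-!
Each local step is a stochastic gradient step on the `L`-smooth `f`: by the descent lemma and
unbiasedness it lowers `E f` by `η/2 · E‖∇f‖²`, up to the variance term `Lη²σ²/2` (using
`Lη ≤ 1`). The SoftPull mixing moves `w^{r,M}_k` by `ν (w̄^{r,M} - w^{r,M}_k)` with
`ν = (1-λ)K/(K-1)`; the descent lemma and Young's inequality bound the resulting increase of `f`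
by `η/8 · ‖∇f(w^{r,M}_k)‖²` plus a multiple of the deviation `‖w^{r,M}_k - w̄^{r,M}‖²`, and
`‖∇f(w^{r,M}_k)‖²` is traded for `‖∇f(w^{r,M-1}_k)‖²` and the second moment of the last stochastic
gradient. Telescoping over the local steps and then over the rounds gives the bound.
-/

open MeasureTheory Finset
open scoped RealInnerProductSpace

theorem add_sum_le_of_succ_add_le {G : Type*} [AddCommGroup G] [PartialOrder G]
    [IsOrderedAddMonoid G] {a b c : ℕ → G} {N : ℕ}
    (h : ∀ n < N, a (n + 1) + b n ≤ a n + c n) :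
    a N + ∑ n ∈ range N, b n ≤ a 0 + ∑ n ∈ range N, c n := by
  have hsum : ∑ n ∈ range N, b n ≤ ∑ n ∈ range N, ((a n - a (n + 1)) + c n) :=
    sum_le_sum fun n hn => by
      rw [sub_add_eq_add_sub, le_sub_iff_add_le']
      exact h n (mem_range.1 hn)
  rw [sum_add_distrib, sum_range_sub'] at hsum
  calc a N + ∑ n ∈ range N, b n ≤ a N + (a 0 - a N + ∑ n ∈ range N, c n) := by gcongr
    _ = a 0 + ∑ n ∈ range N, c n := by abel

theorem sq_norm_le_of_norm_sub_le {F : Type*} [SeminormedAddCommGroup F] {a b : F} {c : ℝ}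
    (h : ‖a - b‖ ≤ c) : ‖a‖ ^ 2 ≤ 2 * ‖b‖ ^ 2 + 2 * c ^ 2 := by
  have hab : ‖a‖ ≤ ‖b‖ + c := (norm_le_norm_add_norm_sub' a b).trans (by gcongr)
  calc ‖a‖ ^ 2 ≤ (‖b‖ + c) ^ 2 := by gcongr
    _ ≤ 2 * ‖b‖ ^ 2 + 2 * c ^ 2 := by linarith [add_sq_le (a := ‖b‖) (b := c)]

theorem mul_le_young {a b ε : ℝ} (hε : 0 < ε) : a * b ≤ ε / 2 * a ^ 2 + 1 / (2 * ε) * b ^ 2 := by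
  have h : ε / 2 * a ^ 2 + 1 / (2 * ε) * b ^ 2 - a * b = (ε * a - b) ^ 2 / (2 * ε) := by
    field_simp; ring
  linarith [h ▸ (by positivity : 0 ≤ (ε * a - b) ^ 2 / (2 * ε))]

theorem smul_add_smul_sum_erase_eq {E ι : Type*} [AddCommGroup E] [Module ℝ E] [Fintype ι]
    [DecidableEq ι] (v : ι → E) (i : ι) (lam : ℝ) (hcard : (Fintype.card ι : ℝ) ≠ 1) :
    lam • v i + ((1 - lam) / ((Fintype.card ι : ℝ) - 1)) • ∑ j ∈ univ.erase i, v j =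
      v i + ((1 - lam) * Fintype.card ι / ((Fintype.card ι : ℝ) - 1)) •
        ((1 / (Fintype.card ι : ℝ)) • ∑ j, v j - v i) := by
  have : Nonempty ι := ⟨i⟩
  have hn : (Fintype.card ι : ℝ) ≠ 0 := Nat.cast_ne_zero.2 Fintype.card_ne_zero
  have hn1 : (Fintype.card ι : ℝ) - 1 ≠ 0 := sub_ne_zero.2 hcard
  rw [sum_erase_eq_sub (mem_univ i)]
  match_scalars
  · field_simp
    ring
  · field_simp

section StochasticDescent

variable {E : Type*} [NormedAddCommGroup E] [InnerProductSpace ℝ E]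
  {Ω : Type*} [MeasurableSpace Ω] {μ : Measure Ω}

theorem integral_norm_sq_eq_of_unbiased_s12 {a g : Ω → E}
    (haI : Integrable (fun ω => ‖a ω‖ ^ 2) μ) (hinnerI : Integrable (fun ω => ⟪a ω, g ω⟫) μ)
    (hvarI : Integrable (fun ω => ‖g ω - a ω‖ ^ 2) μ)
    (hunb : ∫ ω, ⟪a ω, g ω⟫ ∂μ = ∫ ω, ‖a ω‖ ^ 2 ∂μ) :
    ∫ ω, ‖g ω‖ ^ 2 ∂μ = ∫ ω, ‖g ω - a ω‖ ^ 2 ∂μ + ∫ ω, ‖a ω‖ ^ 2 ∂μ := by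
  have hpt : (fun ω => ‖g ω‖ ^ 2) =
      fun ω => ‖g ω - a ω‖ ^ 2 + 2 * ⟪a ω, g ω⟫ - ‖a ω‖ ^ 2 := by
    funext ω
    rw [norm_sub_sq_real, real_inner_comm]
    ring
  have hI : Integrable (fun ω => ‖g ω - a ω‖ ^ 2 + 2 * ⟪a ω, g ω⟫) μ :=
    hvarI.add (hinnerI.const_mul 2)
  rw [hpt, integral_sub hI haI, integral_add hvarI (hinnerI.const_mul 2), integral_const_mul,
    hunb]
  ring

variable [CompleteSpace E] {f : E → ℝ} {f' : E → E} {L : ℝ}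

theorem descent_lemma (hgrad : ∀ x, HasGradientAt f (f' x) x)
    (hlip : ∀ x y, ‖f' x - f' y‖ ≤ L * ‖x - y‖) (x y : E) :
    f y ≤ f x + ⟪f' x, y - x⟫ + L / 2 * ‖y - x‖ ^ 2 := by
  set v := y - x
  let φ : ℝ → ℝ := fun t => f (x + t • v) - t * ⟪f' x, v⟫ - t ^ 2 * (L / 2 * ‖v‖ ^ 2)
  have hφ : ∀ t, HasDerivAt φ (⟪f' (x + t • v) - f' x, v⟫ - t * (L * ‖v‖ ^ 2)) t := by
    intro t
    have hline : HasDerivAt (fun s : ℝ => x + s • v) v t := by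
      simpa only [hasDerivAt_const_add_iff, id_eq, one_smul] using
        ((hasDerivAt_id t).smul_const v).const_add x
    have hcomp : HasDerivAt (fun s : ℝ => f (x + s • v)) ⟪f' (x + t • v), v⟫ t := by
      simpa only [Function.comp_def, InnerProductSpace.toDual_apply_apply] using
        (hgrad (x + t • v)).hasFDerivAt.comp_hasDerivAt t hline
    exact ((hcomp.sub ((hasDerivAt_id t).mul_const ⟪f' x, v⟫)).sub
      ((hasDerivAt_pow 2 t).mul_const (L / 2 * ‖v‖ ^ 2))).congr_deriv
        (by
          rw [inner_sub_left]
          simp only [one_mul, Nat.cast_ofNat, Nat.add_one_sub_one, pow_one]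
          ring)
  have hφ' : ∀ t ∈ interior (Set.Icc (0 : ℝ) 1),
      ⟪f' (x + t • v) - f' x, v⟫ - t * (L * ‖v‖ ^ 2) ≤ 0 := by
    intro t ht
    rw [interior_Icc] at ht
    have hlip_t := hlip (x + t • v) x
    rw [add_sub_cancel_left, norm_smul, Real.norm_of_nonneg ht.1.le] at hlip_t
    have : ⟪f' (x + t • v) - f' x, v⟫ ≤ t * (L * ‖v‖ ^ 2) :=
      calc ⟪f' (x + t • v) - f' x, v⟫ ≤ ‖f' (x + t • v) - f' x‖ * ‖v‖ := real_inner_le_norm _ _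
        _ ≤ L * (t * ‖v‖) * ‖v‖ := by gcongr
        _ = t * (L * ‖v‖ ^ 2) := by ring
    linarith
  have hanti : AntitoneOn φ (Set.Icc 0 1) :=
    antitoneOn_of_hasDerivWithinAt_nonpos (convex_Icc 0 1)
      (fun t _ => (hφ t).continuousAt.continuousWithinAt) (fun t _ => (hφ t).hasDerivWithinAt) hφ'
  have h01 := hanti (Set.left_mem_Icc.2 zero_le_one) (Set.right_mem_Icc.2 zero_le_one) zero_le_one
  norm_num [φ, v] at h01
  linarith

theorem descent_lemma_after_step (hgrad : ∀ x, HasGradientAt f (f' x) x)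
    (hlip : ∀ x y, ‖f' x - f' y‖ ≤ L * ‖x - y‖) {η : ℝ} (hη : 0 < η) (x d v : E) :
    f (x - η • d + v) ≤ f (x - η • d) + η / 4 * ‖f' x‖ ^ 2 + η ^ 3 * L ^ 2 / 4 * ‖d‖ ^ 2 +
      (2 / η + L / 2) * ‖v‖ ^ 2 := by
  set y := x - η • d
  have hdesc := descent_lemma hgrad hlip y (y + v)
  rw [add_sub_cancel_left] at hdesc
  have hyoung := mul_le_young (a := ‖f' y‖) (b := ‖v‖) (show 0 < η / 4 by positivity)
  rw [show 1 / (2 * (η / 4)) = 2 / η by field_simp; ring] at hyoung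
  have hshift : ‖f' y‖ ^ 2 ≤ 2 * ‖f' x‖ ^ 2 + 2 * (L * (η * ‖d‖)) ^ 2 := by
    refine sq_norm_le_of_norm_sub_le ((hlip y x).trans_eq ?_)
    rw [sub_sub_cancel_left, norm_neg, norm_smul, Real.norm_of_nonneg hη.le]
  have hshift' := mul_le_mul_of_nonneg_left hshift (show 0 ≤ η / 8 by positivity)
  linarith [real_inner_le_norm (f' y) v]

theorem integral_sgd_step_le (hgrad : ∀ x, HasGradientAt f (f' x) x)
    (hlip : ∀ x y, ‖f' x - f' y‖ ≤ L * ‖x - y‖) (hL : 0 ≤ L) {η σ : ℝ} (hη : 0 ≤ η)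
    (hLη : L * η ≤ 1) {X Y g : Ω → E} (hY : ∀ ω, Y ω = X ω - η • g ω)
    (hfX : Integrable (fun ω => f (X ω)) μ) (hfY : Integrable (fun ω => f (Y ω)) μ)
    (hinnerI : Integrable (fun ω => ⟪f' (X ω), g ω⟫) μ)
    (hgradI : Integrable (fun ω => ‖f' (X ω)‖ ^ 2) μ)
    (hvarI : Integrable (fun ω => ‖g ω - f' (X ω)‖ ^ 2) μ)
    (hgI : Integrable (fun ω => ‖g ω‖ ^ 2) μ)
    (hunb : ∫ ω, ⟪f' (X ω), g ω⟫ ∂μ = ∫ ω, ‖f' (X ω)‖ ^ 2 ∂μ)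
    (hvar : ∫ ω, ‖g ω - f' (X ω)‖ ^ 2 ∂μ ≤ σ ^ 2) :
    ∫ ω, f (Y ω) ∂μ + η / 2 * ∫ ω, ‖f' (X ω)‖ ^ 2 ∂μ ≤
      ∫ ω, f (X ω) ∂μ + L * η ^ 2 * σ ^ 2 / 2 := by
  have hpt : ∀ ω, f (Y ω) ≤ f (X ω) - η * ⟪f' (X ω), g ω⟫ + L * η ^ 2 / 2 * ‖g ω‖ ^ 2 := by
    intro ω
    have hdesc := descent_lemma hgrad hlip (X ω) (Y ω)
    rw [hY, sub_sub_cancel_left, inner_neg_right, real_inner_smul_right, norm_neg, norm_smul,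
      Real.norm_of_nonneg hη, mul_pow] at hdesc
    rw [hY]
    linarith
  have hI₁ : Integrable (fun ω => f (X ω) - η * ⟪f' (X ω), g ω⟫) μ :=
    hfX.sub (hinnerI.const_mul η)
  have hI₂ : Integrable
      (fun ω => f (X ω) - η * ⟪f' (X ω), g ω⟫ + L * η ^ 2 / 2 * ‖g ω‖ ^ 2) μ :=
    hI₁.add (hgI.const_mul _)
  have hint := integral_mono hfY hI₂ hpt
  rw [integral_add hI₁ (hgI.const_mul _),
    integral_sub hfX (hinnerI.const_mul η), integral_const_mul, integral_const_mul, hunb,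
    integral_norm_sq_eq_of_unbiased_s12 hgradI hinnerI hvarI hunb] at hint
  have hA : 0 ≤ ∫ ω, ‖f' (X ω)‖ ^ 2 ∂μ := integral_nonneg fun ω => sq_nonneg _
  have hV := mul_le_mul_of_nonneg_left hvar (show 0 ≤ L * η ^ 2 / 2 by positivity)
  have hLηA := mul_le_mul_of_nonneg_right hLη
    (show 0 ≤ η / 2 * ∫ ω, ‖f' (X ω)‖ ^ 2 ∂μ by positivity)
  linarith

theorem integral_mix_step_le (hgrad : ∀ x, HasGradientAt f (f' x) x)
    (hlip : ∀ x y, ‖f' x - f' y‖ ≤ L * ‖x - y‖) {η ν : ℝ} (hη : 0 < η) {X g Z B Y : Ω → E}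
    (hZ : ∀ ω, Z ω = X ω - η • g ω) (hY : ∀ ω, Y ω = Z ω + ν • (B ω - Z ω))
    (hfZ : Integrable (fun ω => f (Z ω)) μ) (hfY : Integrable (fun ω => f (Y ω)) μ)
    (hgradI : Integrable (fun ω => ‖f' (X ω)‖ ^ 2) μ)
    (hgI : Integrable (fun ω => ‖g ω‖ ^ 2) μ)
    (hdevI : Integrable (fun ω => ‖Z ω - B ω‖ ^ 2) μ) :
    ∫ ω, f (Y ω) ∂μ ≤ ∫ ω, f (Z ω) ∂μ + η / 4 * ∫ ω, ‖f' (X ω)‖ ^ 2 ∂μ +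
      η ^ 3 * L ^ 2 / 4 * ∫ ω, ‖g ω‖ ^ 2 ∂μ +
      (2 / η + L / 2) * ν ^ 2 * ∫ ω, ‖Z ω - B ω‖ ^ 2 ∂μ := by
  have hpt : ∀ ω, f (Y ω) ≤ f (Z ω) + η / 4 * ‖f' (X ω)‖ ^ 2 + η ^ 3 * L ^ 2 / 4 * ‖g ω‖ ^ 2 +
      (2 / η + L / 2) * ν ^ 2 * ‖Z ω - B ω‖ ^ 2 := by
    intro ω
    have h := descent_lemma_after_step hgrad hlip hη (X ω) (g ω) (ν • (B ω - Z ω))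
    rw [← hZ, ← hY, norm_smul, mul_pow, Real.norm_eq_abs, sq_abs, norm_sub_rev] at h
    linarith
  have hI₁ : Integrable (fun ω => f (Z ω) + η / 4 * ‖f' (X ω)‖ ^ 2) μ :=
    hfZ.add (hgradI.const_mul _)
  have hI₂ : Integrable (fun ω => f (Z ω) + η / 4 * ‖f' (X ω)‖ ^ 2 +
      η ^ 3 * L ^ 2 / 4 * ‖g ω‖ ^ 2) μ :=
    hI₁.add (hgI.const_mul _)
  have hI₃ : Integrable (fun ω => f (Z ω) + η / 4 * ‖f' (X ω)‖ ^ 2 +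
      η ^ 3 * L ^ 2 / 4 * ‖g ω‖ ^ 2 + (2 / η + L / 2) * ν ^ 2 * ‖Z ω - B ω‖ ^ 2) μ :=
    hI₂.add (hdevI.const_mul _)
  have hint := integral_mono hfY hI₃ hpt
  rwa [integral_add hI₂ (hdevI.const_mul _), integral_add hI₁ (hgI.const_mul _),
    integral_add hfZ (hgradI.const_mul _), integral_const_mul, integral_const_mul,
    integral_const_mul] at hint

section Rounds

variable {η σ : ℝ} {M : ℕ} {X g : ℕ → Ω → E}

theorem integral_local_steps_le (hgrad : ∀ x, HasGradientAt f (f' x) x)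
    (hlip : ∀ x y, ‖f' x - f' y‖ ≤ L * ‖x - y‖) (hL : 0 ≤ L) (hη : 0 ≤ η) (hLη : L * η ≤ 1)
    (hstep : ∀ m < M, ∀ ω, X (m + 1) ω = X m ω - η • g m ω)
    (hfI : ∀ m, Integrable (fun ω => f (X m ω)) μ)
    (hinnerI : ∀ m, Integrable (fun ω => ⟪f' (X m ω), g m ω⟫) μ)
    (hgradI : ∀ m, Integrable (fun ω => ‖f' (X m ω)‖ ^ 2) μ)
    (hvarI : ∀ m, Integrable (fun ω => ‖g m ω - f' (X m ω)‖ ^ 2) μ)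
    (hgI : ∀ m, Integrable (fun ω => ‖g m ω‖ ^ 2) μ)
    (hunb : ∀ m, ∫ ω, ⟪f' (X m ω), g m ω⟫ ∂μ = ∫ ω, ‖f' (X m ω)‖ ^ 2 ∂μ)
    (hvar : ∀ m, ∫ ω, ‖g m ω - f' (X m ω)‖ ^ 2 ∂μ ≤ σ ^ 2) :
    ∫ ω, f (X M ω) ∂μ + η / 2 * ∑ m ∈ range M, ∫ ω, ‖f' (X m ω)‖ ^ 2 ∂μ ≤
      ∫ ω, f (X 0 ω) ∂μ + M * (L * η ^ 2 * σ ^ 2 / 2) := by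
  have h := add_sum_le_of_succ_add_le (N := M) (a := fun m => ∫ ω, f (X m ω) ∂μ)
    (b := fun m => η / 2 * ∫ ω, ‖f' (X m ω)‖ ^ 2 ∂μ) (c := fun _ => L * η ^ 2 * σ ^ 2 / 2)
    fun m hm => integral_sgd_step_le hgrad hlip hL hη hLη (hstep m hm) (hfI m) (hfI (m + 1))
      (hinnerI m) (hgradI m) (hvarI m) (hgI m) (hunb m) (hvar m)
  rwa [← mul_sum, sum_const, card_range, nsmul_eq_mul] at h

theorem integral_round_le (hgrad : ∀ x, HasGradientAt f (f' x) x)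
    (hlip : ∀ x y, ‖f' x - f' y‖ ≤ L * ‖x - y‖) (hL : 0 ≤ L) (hη : 0 < η) (hLη : L * η ≤ 1)
    {G ν : ℝ} (hM : 1 ≤ M) {B Y : Ω → E}
    (hstep : ∀ m < M, ∀ ω, X (m + 1) ω = X m ω - η • g m ω)
    (hY : ∀ ω, Y ω = X M ω + ν • (B ω - X M ω))
    (hfI : ∀ m, Integrable (fun ω => f (X m ω)) μ) (hfY : Integrable (fun ω => f (Y ω)) μ)
    (hinnerI : ∀ m, Integrable (fun ω => ⟪f' (X m ω), g m ω⟫) μ)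
    (hgradI : ∀ m, Integrable (fun ω => ‖f' (X m ω)‖ ^ 2) μ)
    (hvarI : ∀ m, Integrable (fun ω => ‖g m ω - f' (X m ω)‖ ^ 2) μ)
    (hgI : ∀ m, Integrable (fun ω => ‖g m ω‖ ^ 2) μ)
    (hdevI : Integrable (fun ω => ‖X M ω - B ω‖ ^ 2) μ)
    (hunb : ∀ m, ∫ ω, ⟪f' (X m ω), g m ω⟫ ∂μ = ∫ ω, ‖f' (X m ω)‖ ^ 2 ∂μ)
    (hvar : ∀ m, ∫ ω, ‖g m ω - f' (X m ω)‖ ^ 2 ∂μ ≤ σ ^ 2)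
    (hg2 : ∀ m, ∫ ω, ‖g m ω‖ ^ 2 ∂μ ≤ 2 * (G ^ 2 + σ ^ 2)) :
    ∫ ω, f (Y ω) ∂μ + η / 4 * ∑ m ∈ range M, ∫ ω, ‖f' (X m ω)‖ ^ 2 ∂μ ≤
      ∫ ω, f (X 0 ω) ∂μ + (M * (L * η ^ 2 * σ ^ 2 / 2) + η ^ 3 * L ^ 2 / 2 * (G ^ 2 + σ ^ 2) +
        (2 / η + L / 2) * ν ^ 2 * ∫ ω, ‖X M ω - B ω‖ ^ 2 ∂μ) := by
  have hloc := integral_local_steps_le hgrad hlip hL hη.le hLη hstep hfI hinnerI hgradI hvarI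
    hgI hunb hvar
  obtain ⟨M, rfl⟩ : ∃ M', M = M' + 1 := ⟨M - 1, by omega⟩
  have hmix := integral_mix_step_le hgrad hlip hη (hstep M M.lt_succ_self) hY (hfI (M + 1)) hfY
    (hgradI M) (hgI M) hdevI
  have hlast : ∫ ω, ‖f' (X M ω)‖ ^ 2 ∂μ ≤ ∑ m ∈ range (M + 1), ∫ ω, ‖f' (X m ω)‖ ^ 2 ∂μ :=
    single_le_sum (f := fun m => ∫ ω, ‖f' (X m ω)‖ ^ 2 ∂μ)
      (fun m _ => integral_nonneg fun ω => sq_nonneg _) (self_mem_range_succ M)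
  have hlast' := mul_le_mul_of_nonneg_left hlast (show 0 ≤ η / 4 by positivity)
  have hg2' := mul_le_mul_of_nonneg_left (hg2 M) (show 0 ≤ η ^ 3 * L ^ 2 / 4 by positivity)
  linarith

end Rounds

end StochasticDescent

theorem stmt_12_general {E : Type*} [NormedAddCommGroup E] [InnerProductSpace ℝ E] [CompleteSpace E]
    {Ω : Type*} [MeasurableSpace Ω] (μ : Measure Ω)
    (K M R : ℕ) (hK : 2 ≤ K) (hM : 1 ≤ M) (hR : 1 ≤ R)
    (lam L η σ G : ℝ) (hη0 : 0 < η) (hη1 : η ≤ 1 / L)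
    (f : E → ℝ) (f' : E → E)
    (hgrad : ∀ x, HasGradientAt f (f' x) x)
    (hlip : ∀ x y, ‖f' x - f' y‖ ≤ L * ‖x - y‖)
    (k : Fin K) (w : ℕ → ℕ → Fin K → Ω → E) (g : ℕ → ℕ → Ω → E)
    (hlocal : ∀ r, ∀ m < M, ∀ ω, w r (m + 1) k ω = w r m k ω - η • g r m ω)
    (hmix : ∀ r ω, w (r + 1) 0 k ω =
      lam • w r M k ω +
        ((1 - lam) / ((K : ℝ) - 1)) • ∑ k' ∈ Finset.univ.erase k, w r M k' ω)
    (hfI : ∀ r m, Integrable (fun ω => f (w r m k ω)) μ)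
    (hinnerI : ∀ r m, Integrable (fun ω => ⟪f' (w r m k ω), g r m ω⟫) μ)
    (hgradI : ∀ r m, Integrable (fun ω => ‖f' (w r m k ω)‖ ^ 2) μ)
    (hvarI : ∀ r m, Integrable (fun ω => ‖g r m ω - f' (w r m k ω)‖ ^ 2) μ)
    (hgI : ∀ r m, Integrable (fun ω => ‖g r m ω‖ ^ 2) μ)
    (hdevI : ∀ r, Integrable
      (fun ω => ‖w r M k ω - (1 / (K : ℝ)) • ∑ k', w r M k' ω‖ ^ 2) μ)
    (hunbiased : ∀ r m,
      ∫ ω, ⟪f' (w r m k ω), g r m ω⟫ ∂μ = ∫ ω, ‖f' (w r m k ω)‖ ^ 2 ∂μ)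
    (hvar : ∀ r m, ∫ ω, ‖g r m ω - f' (w r m k ω)‖ ^ 2 ∂μ ≤ σ ^ 2)
    (hg2 : ∀ r m, ∫ ω, ‖g r m ω‖ ^ 2 ∂μ ≤ 2 * (G ^ 2 + σ ^ 2)) :
    (1 / ((R : ℝ) * M)) * ∑ r ∈ Finset.range R, ∑ m ∈ Finset.range M,
        ∫ ω, ‖f' (w r m k ω)‖ ^ 2 ∂μ ≤
      (4 / (η * R * M)) * ∫ ω, (f (w 0 0 k ω) - f (w R 0 k ω)) ∂μ +
        2 * η * L * σ ^ 2 + 2 * η ^ 2 * L ^ 2 * (G ^ 2 + σ ^ 2) / M +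
        (1 / ((R : ℝ) * M)) * (8 / η ^ 2 + 2 * L / η) *
          ((1 - lam) ^ 2 * (K : ℝ) ^ 2 / ((K : ℝ) - 1) ^ 2) *
          ∑ r ∈ Finset.range R,
            ∫ ω, ‖w r M k ω - (1 / (K : ℝ)) • ∑ k', w r M k' ω‖ ^ 2 ∂μ := by
  have hL : 0 < L := one_div_pos.mp (hη0.trans_le hη1)
  have hLη : L * η ≤ 1 := by rwa [le_div_iff₀ hL, mul_comm] at hη1
  have hK1 : (Fintype.card (Fin K) : ℝ) ≠ 1 := by rw [Fintype.card_fin]; norm_cast; omega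
  have hpull : ∀ r ω, w (r + 1) 0 k ω = w r M k ω + ((1 - lam) * K / (K - 1)) •
      ((1 / (K : ℝ)) • ∑ k', w r M k' ω - w r M k ω) := fun r ω => by
    rw [hmix r ω]
    simpa only [Fintype.card_fin] using smul_add_smul_sum_erase_eq (w r M · ω) k lam hK1
  have hround := fun r (_ : r < R) => integral_round_le hgrad hlip hL.le hη0 hLη hM (hlocal r)
    (hpull r) (hfI r) (hfI (r + 1) 0) (hinnerI r) (hgradI r) (hvarI r) (hgI r) (hdevI r)
    (hunbiased r) (hvar r) (hg2 r)
  have key := add_sum_le_of_succ_add_le (a := fun r => ∫ ω, f (w r 0 k ω) ∂μ)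
    (b := fun r => η / 4 * ∑ m ∈ range M, ∫ ω, ‖f' (w r m k ω)‖ ^ 2 ∂μ) hround
  rw [← mul_sum, sum_add_distrib, sum_const, card_range, nsmul_eq_mul, ← mul_sum] at key
  have hR0 : (0 : ℝ) < R := by exact_mod_cast hR
  have hM0 : (0 : ℝ) < M := by exact_mod_cast hM
  rw [integral_sub (hfI 0 0) (hfI R 0)]
  calc _ = 4 / (η * R * M) *
        (η / 4 * ∑ r ∈ range R, ∑ m ∈ range M, ∫ ω, ‖f' (w r m k ω)‖ ^ 2 ∂μ) := by
        field_simp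
    _ ≤ 4 / (η * R * M) * (∫ ω, f (w 0 0 k ω) ∂μ - ∫ ω, f (w R 0 k ω) ∂μ +
          R * (M * (L * η ^ 2 * σ ^ 2 / 2) + η ^ 3 * L ^ 2 / 2 * (G ^ 2 + σ ^ 2)) +
          (2 / η + L / 2) * ((1 - lam) * K / (K - 1)) ^ 2 *
            ∑ r ∈ range R, ∫ ω, ‖w r M k ω - (1 / (K : ℝ)) • ∑ k', w r M k' ω‖ ^ 2 ∂μ) := by
        gcongr
        linarith
    _ = _ := by
        field_simp
        ring

/-- SoftPull bound for client `k` over `R` rounds of `M` local stochastic gradient steps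
followed by the SoftPull mixing with parameter `λ ∈ [1/K, 1]`:
`(1/(RM))·Σ_{r<R} Σ_{m<M} E‖∇f_k(w^{r,m}_k)‖² ≤ (4/(ηRM))·E[f_k(w^{0,0}_k) − f_k(w^{R,0}_k)]
  + 2ηLσ² + 2η²L²(G²+σ²)/M
  + (1/(RM))·(8/η² + 2L/η)·((1−λ)²K²/(K−1)²)·Σ_{r<R} E‖w^{r,M}_k − w̄^{r,M}‖²`. -/
theorem stmt_12 {E : Type*} [NormedAddCommGroup E] [InnerProductSpace ℝ E] [CompleteSpace E]
    {Ω : Type*} [MeasurableSpace Ω] (μ : Measure Ω) [IsProbabilityMeasure μ]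
    (K M R : ℕ) (hK : 2 ≤ K) (hM : 1 ≤ M) (hR : 1 ≤ R)
    (lam L η σ G : ℝ) (hL : 0 < L) (hη0 : 0 < η) (hη1 : η ≤ 1 / L)
    (hlam0 : 1 / (K : ℝ) ≤ lam) (hlam1 : lam ≤ 1)
    (f : E → ℝ) (f' : E → E)
    (hgrad : ∀ x, HasGradientAt f (f' x) x)
    (hlip : ∀ x y, ‖f' x - f' y‖ ≤ L * ‖x - y‖)
    (k : Fin K) (w : ℕ → ℕ → Fin K → Ω → E) (g : ℕ → ℕ → Ω → E)
    (hlocal : ∀ r, ∀ m < M, ∀ ω, w r (m + 1) k ω = w r m k ω - η • g r m ω)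
    (hmix : ∀ r ω, w (r + 1) 0 k ω =
      lam • w r M k ω +
        ((1 - lam) / ((K : ℝ) - 1)) • ∑ k' ∈ Finset.univ.erase k, w r M k' ω)
    (hfI : ∀ r m, Integrable (fun ω => f (w r m k ω)) μ)
    (hinnerI : ∀ r m, Integrable (fun ω => ⟪f' (w r m k ω), g r m ω⟫) μ)
    (hgradI : ∀ r m, Integrable (fun ω => ‖f' (w r m k ω)‖ ^ 2) μ)
    (hvarI : ∀ r m, Integrable (fun ω => ‖g r m ω - f' (w r m k ω)‖ ^ 2) μ)
    (hgI : ∀ r m, Integrable (fun ω => ‖g r m ω‖ ^ 2) μ)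
    (hdevI : ∀ r, Integrable
      (fun ω => ‖w r M k ω - (1 / (K : ℝ)) • ∑ k', w r M k' ω‖ ^ 2) μ)
    (hunbiased : ∀ r m,
      ∫ ω, ⟪f' (w r m k ω), g r m ω⟫ ∂μ = ∫ ω, ‖f' (w r m k ω)‖ ^ 2 ∂μ)
    (hvar : ∀ r m, ∫ ω, ‖g r m ω - f' (w r m k ω)‖ ^ 2 ∂μ ≤ σ ^ 2)
    (hg2 : ∀ r m, ∫ ω, ‖g r m ω‖ ^ 2 ∂μ ≤ 2 * (G ^ 2 + σ ^ 2)) :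
    (1 / ((R : ℝ) * M)) * ∑ r ∈ Finset.range R, ∑ m ∈ Finset.range M,
        ∫ ω, ‖f' (w r m k ω)‖ ^ 2 ∂μ ≤
      (4 / (η * R * M)) * ∫ ω, (f (w 0 0 k ω) - f (w R 0 k ω)) ∂μ +
        2 * η * L * σ ^ 2 + 2 * η ^ 2 * L ^ 2 * (G ^ 2 + σ ^ 2) / M +
        (1 / ((R : ℝ) * M)) * (8 / η ^ 2 + 2 * L / η) *
          ((1 - lam) ^ 2 * (K : ℝ) ^ 2 / ((K : ℝ) - 1) ^ 2) *
          ∑ r ∈ Finset.range R,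
            ∫ ω, ‖w r M k ω - (1 / (K : ℝ)) • ∑ k', w r M k' ω‖ ^ 2 ∂μ :=
  stmt_12_general μ K M R hK hM hR lam L η σ G hη0 hη1 f f' hgrad hlip k w g hlocal hmix hfI hinnerI
    hgradI hvarI hgI hdevI hunbiased hvar hg2
end
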